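/- Let σ be a permutation of {1,…,d} and let K̃(σ) := {x ∈ ℤ_{≥0}^d : x_{σ(1)} ≥ x_{σ(2)} ≥ ⋯ ≥ x_{σ(d)}, with x_{σ(j)} > x_{σ(j+1)} whenever j ∈ Des σ}. Then, as an identity of formal power series in z, (Σ_{t≥0} #{x ∈ K̃(σ) : x_1 + ⋯ + x_d = t} z^t) · Π_{j=1}^d (1 − z^j) = z^{maj σ}. -/

import Mathlib

/-!
With `y = x ∘ σ`, membership in `K̃(σ)` says that `y` is weakly decreasing and drops by at least
one at every descent of `σ`. Subtracting from `y j` the number of descents at positions `≥ j`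
maps `K̃(σ)` bijectively onto the weakly decreasing sequences and lowers the entry sum by exactly
`maj σ`, since a descent at (1-based) position `i` is subtracted from the first `i` entries.
Weakly decreasing sequences of length `d` have generating function `∏_{j=1}^d (1 - z^j)⁻¹`: such
a sequence either ends in `0`, or arises from one of the same length by adding `1` to every entry.
-/

open scoped Classical

/-- The major index of a permutation `σ` of `{0,…,d-1}` (written `{1,…,d}` in 1-based
notation): the sum of the (1-based) positions `j` with `σ(j) > σ(j+1)`. In 0-based
notation, the pair of positions `(i, i+1)` contributes `i+1` when `σ(i) > σ(i+1)`. -/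
def majIdx {d : ℕ} (σ : Equiv.Perm (Fin d)) : ℕ :=
  ∑ i : Fin d, if h : (i : ℕ) + 1 < d then
    (if σ ⟨(i : ℕ) + 1, h⟩ < σ i then (i : ℕ) + 1 else 0) else 0

/-- Membership in `K̃(σ)`: `x ∈ ℤ_{≥0}^d` satisfies `x_{σ(1)} ≥ x_{σ(2)} ≥ ⋯ ≥ x_{σ(d)}`,
with strict inequality `x_{σ(j)} > x_{σ(j+1)}` exactly at descent positions `j ∈ Des σ`. -/
def MemKtilde {d : ℕ} (σ : Equiv.Perm (Fin d)) (x : Fin d → ℕ) : Prop :=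
  ∀ i : Fin d, ∀ h : (i : ℕ) + 1 < d,
    x (σ ⟨(i : ℕ) + 1, h⟩) ≤ x (σ i) ∧
    (σ ⟨(i : ℕ) + 1, h⟩ < σ i → x (σ ⟨(i : ℕ) + 1, h⟩) < x (σ i))

open PowerSeries Finset

theorem Fin.antitone_of_succ_le {α : Type*} [Preorder α] {d : ℕ} {f : Fin d → α}
    (hf : ∀ (i : Fin d) (h : (i : ℕ) + 1 < d), f ⟨(i : ℕ) + 1, h⟩ ≤ f i) : Antitone f := by
  cases d with
  | zero => exact fun i => i.elim0
  | succ n => exact Fin.antitone_iff_succ_le.2 fun i => hf i.castSucc (by simp)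

theorem antitone_snoc_zero {d : ℕ} {y : Fin d → ℕ} (hy : Antitone y) :
    Antitone (Fin.snoc y 0 : Fin (d + 1) → ℕ) := by
  intro i j hij
  induction j using Fin.lastCases with
  | last => simp
  | cast j =>
    induction i using Fin.lastCases with
    | last => exact absurd hij (by simp [Fin.le_def])
    | cast i => simpa using hy hij

theorem finite_of_sum_le {ι : Type*} [Fintype ι] {P : (ι → ℕ) → Prop} {t : ℕ}
    (h : ∀ y, P y → ∑ i, y i ≤ t) : Finite {y // P y} :=
  Set.Finite.to_subtype <| (Set.finite_Iic fun _ => t).subset fun y hy i =>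
    (single_le_sum (fun j _ => Nat.zero_le (y j)) (mem_univ i)).trans (h y hy)

instance {ι : Type*} [Fintype ι] (P : (ι → ℕ) → Prop) (c t : ℕ) :
    Finite {y : ι → ℕ // P y ∧ ∑ i, y i + c = t} :=
  finite_of_sum_le (t := t) fun _ hy => by have := hy.2; omega

instance {ι : Type*} [Fintype ι] (P : (ι → ℕ) → Prop) (t : ℕ) :
    Finite {y : ι → ℕ // P y ∧ ∑ i, y i = t} :=
  finite_of_sum_le fun _ hy => hy.2.le

section GenFun

variable (R : Type*) [CommRing R] {ι : Type*} [Fintype ι]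

noncomputable def sumGenFun (P : (ι → ℕ) → Prop) : R⟦X⟧ :=
  mk fun t => (Nat.card {y // P y ∧ ∑ i, y i = t} : R)

variable {R}

theorem coeff_X_pow_mul_sumGenFun (P : (ι → ℕ) → Prop) (c t : ℕ) :
    coeff t (X ^ c * sumGenFun R P) = (Nat.card {y // P y ∧ ∑ i, y i + c = t} : R) := by
  rw [coeff_X_pow_mul', sumGenFun, coeff_mk]
  split_ifs with hc
  · exact congrArg _ <| Nat.card_congr <|
      Equiv.subtypeEquivRight fun _ => and_congr_right fun _ => by omega
  · have : IsEmpty {y // P y ∧ ∑ i, y i + c = t} := ⟨fun y => hc (by omega)⟩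
    simp

theorem sumGenFun_eq_X_pow_mul {κ : Type*} [Fintype κ] {P : (ι → ℕ) → Prop}
    {Q : (κ → ℕ) → Prop} (c : ℕ)
    (e : ∀ t, {x // P x ∧ ∑ i, x i = t} ≃ {y // Q y ∧ ∑ i, y i + c = t}) :
    sumGenFun R P = X ^ c * sumGenFun R Q := by
  ext t
  rw [coeff_X_pow_mul_sumGenFun, sumGenFun, coeff_mk, Nat.card_congr (e t)]

end GenFun

section Antitone

variable {R : Type*} [CommRing R]

noncomputable def antitoneSuccEquiv (d t : ℕ) :
    {y : Fin d → ℕ // Antitone y ∧ ∑ i, y i = t} ⊕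
        {y : Fin (d + 1) → ℕ // Antitone y ∧ ∑ i, y i + (d + 1) = t} ≃
      {y : Fin (d + 1) → ℕ // Antitone y ∧ ∑ i, y i = t} := by
  refine Equiv.ofBijective
    (Sum.elim (fun y => ⟨Fin.snoc y.1 0, antitone_snoc_zero y.2.1, ?_⟩)
      (fun y => ⟨(· + 1) ∘ y.1, fun i j hij => Nat.succ_le_succ (y.2.1 hij), ?_⟩)) ⟨?_, ?_⟩
  · simpa [Fin.sum_univ_castSucc] using y.2.2
  · simpa [sum_add_distrib] using y.2.2
  · refine Function.Injective.sumElim ?_ ?_ fun y z h => ?_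
    · intro y z h
      exact Subtype.ext (by simpa using congrArg (Fin.init ∘ Subtype.val) h)
    · intro y z h
      exact Subtype.ext (funext fun i => by simpa using congrFun (congrArg Subtype.val h) i)
    · simpa using congrFun (congrArg Subtype.val h) (Fin.last d)
  · rintro ⟨y, hy, hsum⟩
    by_cases h0 : y (Fin.last d) = 0
    · refine ⟨.inl ⟨Fin.init y, hy.comp_monotone Fin.strictMono_castSucc.monotone, ?_⟩, ?_⟩
      · simpa [Fin.sum_univ_castSucc, h0, Fin.init] using hsum
      · exact Subtype.ext (by simpa [h0] using Fin.snoc_init_self y)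
    · have hpos : ∀ i, 1 ≤ y i := fun i =>
        (Nat.one_le_iff_ne_zero.2 h0).trans (hy (Fin.le_last i))
      refine ⟨.inr ⟨(· - 1) ∘ y, fun i j hij => Nat.sub_le_sub_right (hy hij) 1, ?_⟩, ?_⟩
      · have : ∑ i, (y i - 1) + ∑ _i : Fin (d + 1), 1 = ∑ i, y i := by
          rw [← sum_add_distrib]
          exact sum_congr rfl fun i _ => Nat.sub_add_cancel (hpos i)
        simpa using this.trans hsum
      · exact Subtype.ext (funext fun i => by simpa using Nat.sub_add_cancel (hpos i))

theorem sumGenFun_antitone_succ (d : ℕ) :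
    sumGenFun R (Antitone : (Fin (d + 1) → ℕ) → Prop) =
      sumGenFun R (Antitone : (Fin d → ℕ) → Prop) +
        X ^ (d + 1) * sumGenFun R (Antitone : (Fin (d + 1) → ℕ) → Prop) := by
  ext t
  rw [map_add, coeff_X_pow_mul_sumGenFun, sumGenFun, sumGenFun, coeff_mk, coeff_mk,
    ← Nat.card_congr (antitoneSuccEquiv d t), Nat.card_sum, Nat.cast_add]

theorem sumGenFun_fin_zero {P : (Fin 0 → ℕ) → Prop} (hP : ∀ y, P y) : sumGenFun R P = 1 := by
  ext t
  rw [sumGenFun, coeff_mk, coeff_one]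
  split_ifs with ht <;> simp [hP, ht, eq_comm]

theorem sumGenFun_antitone_mul_prod (d : ℕ) :
    sumGenFun R (Antitone : (Fin d → ℕ) → Prop) * ∏ j ∈ range d, (1 - X ^ (j + 1)) = 1 := by
  induction d with
  | zero => simpa using sumGenFun_fin_zero Subsingleton.antitone
  | succ d ih =>
    rw [prod_range_succ, mul_comm _ (1 - _), ← mul_assoc]
    convert ih using 2
    linear_combination sumGenFun_antitone_succ (R := R) d

end Antitone

section Descents

variable {d : ℕ} (σ : Equiv.Perm (Fin d))

def descentInd (i : Fin d) : ℕ :=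
  if h : (i : ℕ) + 1 < d then (if σ ⟨(i : ℕ) + 1, h⟩ < σ i then 1 else 0) else 0

def descentsFrom (j : Fin d) : ℕ :=
  ∑ i ∈ Ici j, descentInd σ i

theorem majIdx_eq_sum_mul_descentInd :
    majIdx σ = ∑ i : Fin d, ((i : ℕ) + 1) * descentInd σ i := by
  refine sum_congr rfl fun i _ => ?_
  unfold descentInd
  split_ifs <;> simp

theorem sum_descentsFrom : ∑ j, descentsFrom σ j = majIdx σ := by
  rw [majIdx_eq_sum_mul_descentInd]
  unfold descentsFrom
  rw [sum_comm' (t' := univ) (s' := Iic) fun j i => by simp]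
  simp

theorem descentsFrom_eq_add {j : Fin d} (h : (j : ℕ) + 1 < d) :
    descentsFrom σ j = descentInd σ j + descentsFrom σ ⟨(j : ℕ) + 1, h⟩ := by
  have : Finset.Ici j = insert j (Finset.Ici ⟨(j : ℕ) + 1, h⟩) := by
    ext i; simp only [mem_Ici, mem_insert, Fin.le_def, Fin.ext_iff]; omega
  rw [descentsFrom, this, sum_insert (by simp only [mem_Ici, Fin.le_def]; omega)]
  rfl

theorem descentsFrom_eq_zero {j : Fin d} (h : ¬(j : ℕ) + 1 < d) : descentsFrom σ j = 0 :=
  sum_eq_zero fun i hi => dif_neg (by rw [mem_Ici, Fin.le_def] at hi; omega)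

variable {σ}

theorem memKtilde_iff {x : Fin d → ℕ} :
    MemKtilde σ x ↔ ∀ (i : Fin d) (h : (i : ℕ) + 1 < d),
      x (σ ⟨(i : ℕ) + 1, h⟩) + descentInd σ i ≤ x (σ i) := by
  refine forall₂_congr fun i h => ?_
  unfold descentInd
  rw [dif_pos h]
  split_ifs with hd
  · simp only [hd, true_implies]
    omega
  · simp only [hd, false_implies, and_true, add_zero]

theorem descentsFrom_le_of_memKtilde {x : Fin d → ℕ} (hx : MemKtilde σ x) (j : Fin d) :
    descentsFrom σ j ≤ x (σ j) := by
  by_cases h : (j : ℕ) + 1 < d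
  · have := descentsFrom_le_of_memKtilde hx ⟨(j : ℕ) + 1, h⟩
    have := memKtilde_iff.1 hx j h
    rw [descentsFrom_eq_add σ h]
    omega
  · simp [descentsFrom_eq_zero σ h]
termination_by d - j

theorem antitone_sub_descentsFrom {x : Fin d → ℕ} (hx : MemKtilde σ x) :
    Antitone fun j => x (σ j) - descentsFrom σ j :=
  Fin.antitone_of_succ_le fun j h => by
    have := descentsFrom_le_of_memKtilde hx ⟨(j : ℕ) + 1, h⟩
    have := memKtilde_iff.1 hx j h
    have := descentsFrom_eq_add σ h
    omega

theorem memKtilde_add_descentsFrom {y : Fin d → ℕ} (hy : Antitone y) :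
    MemKtilde σ fun i => y (σ.symm i) + descentsFrom σ (σ.symm i) :=
  memKtilde_iff.2 fun j h => by
    have := hy (Fin.le_def.2 (Nat.le_succ j) : j ≤ ⟨(j : ℕ) + 1, h⟩)
    have := descentsFrom_eq_add σ h
    simp only [Equiv.symm_apply_apply]
    omega

variable (σ) in
noncomputable def ktildeEquivAntitone (t : ℕ) :
    {x // MemKtilde σ x ∧ ∑ i, x i = t} ≃
      {y : Fin d → ℕ // Antitone y ∧ ∑ i, y i + majIdx σ = t} where
  toFun x := ⟨fun j => x.1 (σ j) - descentsFrom σ j, antitone_sub_descentsFrom x.2.1, by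
    rw [← sum_descentsFrom σ, ← sum_add_distrib]
    refine .trans ?_ ((Equiv.sum_comp σ x.1).trans x.2.2)
    exact sum_congr rfl fun j _ => Nat.sub_add_cancel (descentsFrom_le_of_memKtilde x.2.1 j)⟩
  invFun y := ⟨fun i => y.1 (σ.symm i) + descentsFrom σ (σ.symm i),
    memKtilde_add_descentsFrom y.2.1, by
    rw [σ.symm.sum_comp (fun j => y.1 j + descentsFrom σ j), sum_add_distrib, sum_descentsFrom,
      y.2.2]⟩
  left_inv x := Subtype.ext <| funext fun i => by
    simpa using Nat.sub_add_cancel (descentsFrom_le_of_memKtilde x.2.1 (σ.symm i))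
  right_inv y := Subtype.ext <| funext fun j => by simp

end Descents

/-- The generating function of `K̃(σ)` by entry sum: multiplied by `∏_{j=1}^d (1-z^j)` it
equals `z^{maj σ}`. -/
theorem ktilde_generating_function (d : ℕ) (σ : Equiv.Perm (Fin d)) :
    (PowerSeries.mk fun t =>
        (Nat.card {x : Fin d → ℕ // MemKtilde σ x ∧ ∑ i, x i = t} : ℤ))
      * ∏ j ∈ Finset.range d, (1 - PowerSeries.X ^ (j + 1))
    = (PowerSeries.X : PowerSeries ℤ) ^ majIdx σ := by
  have h : sumGenFun ℤ (MemKtilde σ) =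
      X ^ majIdx σ * sumGenFun ℤ (Antitone : (Fin d → ℕ) → Prop) :=
    sumGenFun_eq_X_pow_mul _ (ktildeEquivAntitone σ)
  rw [← sumGenFun, h, mul_assoc, sumGenFun_antitone_mul_prod, mul_one]
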